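/- Let $\Omega \subset \mathbb{R}^n$ be an open set bounded in one direction and $0 < s < 1$. Then there exists a constant $C = C(n,s,\Omega) > 0$ such that $\|u\|_{L^2(\mathbb{R}^n)}^2 \le C [u]_{H^s(\mathbb{R}^n)}^2$ for all $u$ in the closure of $C_c^\infty(\Omega)$ in $H^s(\mathbb{R}^n)$, where $[u]_{H^s(\mathbb{R}^n)}^2 = \int_{\mathbb{R}^{2n}} \frac{|u(x)-u(y)|^2}{|x-y|^{n+2s}}\,dx\,dy$ is the Gagliardo seminorm. -/

import Mathlib

open MeasureTheory Real Filter Topology RealInnerProductSpace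

noncomputable section

abbrev Euc (n : ℕ) := EuclideanSpace ℝ (Fin n)

noncomputable def gagSq (n : ℕ) (s : ℝ) (u : Euc n → ℝ) : ℝ :=
  ∫ p : Euc n × Euc n, (u p.1 - u p.2) ^ 2 / ‖p.1 - p.2‖ ^ ((n : ℝ) + 2 * s)

noncomputable def l2Sq {n : ℕ} (u : Euc n → ℝ) : ℝ := ∫ x : Euc n, (u x) ^ 2

noncomputable def hsNorm (n : ℕ) (s : ℝ) (u : Euc n → ℝ) : ℝ :=
  Real.sqrt (l2Sq u + gagSq n s u)

def MemHs (n : ℕ) (s : ℝ) (u : Euc n → ℝ) : Prop :=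
  MeasureTheory.MemLp u 2 volume ∧
    MeasureTheory.Integrable (fun p : Euc n × Euc n =>
      (u p.1 - u p.2) ^ 2 / ‖p.1 - p.2‖ ^ ((n : ℝ) + 2 * s)) volume

def IsTestOn {n : ℕ} (Ω : Set (Euc n)) (φ : Euc n → ℝ) : Prop :=
  ContDiff ℝ (⊤ : ℕ∞) φ ∧ HasCompactSupport φ ∧ tsupport φ ⊆ Ω

def MemTildeHs (n : ℕ) (s : ℝ) (Ω : Set (Euc n)) (u : Euc n → ℝ) : Prop :=
  MemHs n s u ∧ ∃ φ : ℕ → Euc n → ℝ, (∀ k, IsTestOn Ω (φ k)) ∧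
    Filter.Tendsto (fun k => hsNorm n s (fun x => u x - φ k x)) Filter.atTop (nhds 0)

def BoundedInOneDirection (n : ℕ) (Ω : Set (Euc n)) : Prop :=
  ∃ e : Euc n, ‖e‖ = 1 ∧ ∃ M : ℝ, ∀ x ∈ Ω, |⟪x, e⟫| ≤ M

noncomputable def Bgamma (n : ℕ) (s C : ℝ) (γ u v : Euc n → ℝ) : ℝ :=
  (C / 2) * ∫ p : Euc n × Euc n,
    Real.sqrt (γ p.1) * Real.sqrt (γ p.2) * (u p.1 - u p.2) * (v p.1 - v p.2) /
      ‖p.1 - p.2‖ ^ ((n : ℝ) + 2 * s)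

noncomputable def halfLap (n : ℕ) (s : ℝ) (u : Euc n → ℝ) : Euc n → ℂ :=
  fun x => FourierTransformInv.fourierInv
    (fun ξ => ((‖ξ‖ ^ s : ℝ) : ℂ) * FourierTransform.fourier (fun y => (u y : ℂ)) ξ) x

noncomputable def besselFn (n : ℕ) (s : ℝ) (u : Euc n → ℝ) : Euc n → ℂ :=
  fun x => FourierTransformInv.fourierInv
    (fun ξ => (((1 + ‖ξ‖ ^ 2) ^ (s / 2) : ℝ) : ℂ) * FourierTransform.fourier (fun y => (u y : ℂ)) ξ) x

def MemBessel (n : ℕ) (s p : ℝ) (u : Euc n → ℝ) : Prop :=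
  MeasureTheory.MemLp (besselFn n s u) (ENNReal.ofReal p) volume

noncomputable def besselNorm (n : ℕ) (s p : ℝ) (u : Euc n → ℝ) : ℝ :=
  (eLpNorm (besselFn n s u) (ENNReal.ofReal p) volume).toReal

noncomputable def linftyNorm {n : ℕ} (u : Euc n → ℝ) : ℝ :=
  (eLpNorm u ⊤ volume).toReal

noncomputable def l2PairRe {n : ℕ} (A B : Euc n → ℂ) : ℝ :=
  (∫ x, A x * starRingEnd ℂ (B x)).re

noncomputable def qGammaForm (n : ℕ) (s : ℝ) (γ u φ : Euc n → ℝ) : ℝ :=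
  -l2PairRe (halfLap n s (fun y => Real.sqrt (γ y) - 1))
    (halfLap n s (fun y => u y * φ y / Real.sqrt (γ y)))


theorem stmt_2 (n : ℕ) (s : ℝ) (hs0 : 0 < s) (hs1 : s < 1)
    (Ω : Set (Euc n)) (hΩ : IsOpen Ω) (hb : BoundedInOneDirection n Ω) :
    ∃ C > 0, ∀ u : Euc n → ℝ, MemTildeHs n s Ω u → l2Sq u ≤ C * gagSq n s u := by
  classical
  obtain ⟨e, he, M0, hM0⟩ := hb
  set M : ℝ := max M0 1 with hMdef
  have hM1 : (1:ℝ) ≤ M := le_max_right _ _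
  have hMpos : (0:ℝ) < M := lt_of_lt_of_le one_pos hM1
  set r : ℝ := (n : ℝ) + 2 * s with hr
  have hrpos : 0 < r := by positivity
  have hinner : Continuous fun x : Euc n => ⟪x, e⟫ :=
    continuous_id.inner continuous_const
  set S : Set (Euc n) := {x | |⟪x, e⟫| ≤ M} with hSdef
  have hSclosed : IsClosed S := isClosed_le (continuous_abs.comp hinner) continuous_const
  have hSmeas : MeasurableSet S := hSclosed.measurableSet
  have hΩS : Ω ⊆ S := fun x hx => le_trans (hM0 x hx) (le_max_left _ _)
  set D : Set (Euc n) := {z | 2 * M < ⟪z, e⟫} ∩ Metric.ball 0 (4 * M) with hDdef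
  have hDopen : IsOpen D := (isOpen_lt continuous_const hinner).inter Metric.isOpen_ball
  have hDmeas : MeasurableSet D := hDopen.measurableSet
  have hDne : D.Nonempty := by
    refine ⟨(3 * M) • e, ?_, ?_⟩
    · show 2 * M < ⟪(3 * M) • e, e⟫
      rw [real_inner_smul_left, real_inner_self_eq_norm_sq, he]
      nlinarith
    · rw [Metric.mem_ball, dist_zero_right, norm_smul, he, Real.norm_eq_abs,
        abs_of_pos (by nlinarith : (0:ℝ) < 3 * M)]
      nlinarith
  set d : ENNReal := volume D with hd
  have hdpos : 0 < d := hDopen.measure_pos volume hDne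
  have hdfin : d < ⊤ :=
    lt_of_le_of_lt (measure_mono Set.inter_subset_right) measure_ball_lt_top
  have hdt : 0 < d.toReal := ENNReal.toReal_pos hdpos.ne' hdfin.ne
  have hadd : ∀ x ∈ S, ∀ z ∈ D, x + z ∉ S := by
    intro x hx z hz hmem
    have h1 : |⟪x, e⟫| ≤ M := hx
    have h2 : 2 * M < ⟪z, e⟫ := hz.1
    have h3 : |⟪x + z, e⟫| ≤ M := hmem
    rw [inner_add_left] at h3
    have := abs_le.mp h1
    have := abs_le.mp h3
    linarith [le_abs_self (⟪x, e⟫ + ⟪z, e⟫)]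
  have hznorm : ∀ z ∈ D, 0 < ‖z‖ ∧ ‖z‖ ≤ 4 * M := by
    intro z hz
    have h1 : 2 * M < ⟪z, e⟫ := hz.1
    have h2 : ⟪z, e⟫ ≤ ‖z‖ * ‖e‖ := real_inner_le_norm z e
    rw [he, mul_one] at h2
    constructor
    · linarith
    · have := Metric.mem_ball.mp hz.2
      rw [dist_zero_right] at this
      linarith
  refine ⟨(4 * M) ^ r / d.toReal, by positivity, ?_⟩
  rintro u ⟨⟨hu2, huI⟩, φ, hφ, hlim⟩
  have hφmem : ∀ k, MemLp (φ k) 2 (volume : Measure (Euc n)) := fun k =>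
    ((hφ k).1.continuous).memLp_of_hasCompactSupport (hφ k).2.1
  have hl2nn : ∀ v : Euc n → ℝ, 0 ≤ l2Sq v := fun v =>
    integral_nonneg fun x => sq_nonneg _
  have hgagnn : ∀ v : Euc n → ℝ, 0 ≤ gagSq n s v := fun v =>
    integral_nonneg fun q => div_nonneg (sq_nonneg _) (Real.rpow_nonneg (norm_nonneg _) _)
  -- Step 0 : L² convergence of φ k to u
  have hl2tend : Tendsto (fun k => l2Sq (fun x => u x - φ k x)) atTop (nhds 0) := by
    have hsq : Tendsto (fun k => (hsNorm n s (fun x => u x - φ k x)) ^ 2) atTop (nhds 0) := by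
      have := hlim.pow 2
      simpa using this
    refine squeeze_zero (fun k => hl2nn _) (fun k => ?_) hsq
    have h1 : 0 ≤ l2Sq (fun x => u x - φ k x) + gagSq n s (fun x => u x - φ k x) :=
      add_nonneg (hl2nn _) (hgagnn _)
    rw [hsNorm, Real.sq_sqrt h1]
    exact le_add_of_nonneg_right (hgagnn _)
  -- Step 1 : u vanishes a.e. outside the slab S
  have humeas : AEMeasurable u (volume : Measure (Euc n)) :=
    hu2.aestronglyMeasurable.aemeasurable
  have husq : AEMeasurable (fun x => ENNReal.ofReal (u x ^ 2)) (volume : Measure (Euc n)) :=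
    (humeas.pow_const 2).ennreal_ofReal
  have hA : ∫⁻ x in Sᶜ, ENNReal.ofReal (u x ^ 2) = 0 := by
    have hk : ∀ k, (∫⁻ x in Sᶜ, ENNReal.ofReal (u x ^ 2)) ≤
        ENNReal.ofReal (l2Sq (fun x => u x - φ k x)) := by
      intro k
      have heq : ∫⁻ x in Sᶜ, ENNReal.ofReal (u x ^ 2) =
          ∫⁻ x in Sᶜ, ENNReal.ofReal ((u x - φ k x) ^ 2) := by
        refine setLIntegral_congr_fun hSmeas.compl (fun x hx => ?_)
        have hx0 : φ k x = 0 := by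
          by_contra hne
          exact hx (hΩS ((hφ k).2.2 (subset_tsupport _ hne)))
        rw [hx0, sub_zero]
      rw [heq]
      refine le_trans (setLIntegral_le_lintegral _ _) (le_of_eq ?_)
      exact (ofReal_integral_eq_lintegral_ofReal ((hu2.sub (hφmem k)).integrable_sq)
        (ae_of_all _ fun x => sq_nonneg _)).symm
    have htend : Tendsto (fun k => ENNReal.ofReal (l2Sq (fun x => u x - φ k x)))
        atTop (nhds 0) := by
      have := (ENNReal.continuous_ofReal.tendsto 0).comp hl2tend
      simpa [Function.comp_def] using this
    simpa using ge_of_tendsto' htend hk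
  have hnull : ∀ᵐ x : Euc n, x ∉ S → u x = 0 := by
    have h0 := (lintegral_eq_zero_iff' (husq.restrict)).mp hA
    have h0' : ∀ᵐ x ∂(volume.restrict Sᶜ), ENNReal.ofReal (u x ^ 2) = 0 := by
      filter_upwards [h0] with x hx using hx
    rw [ae_restrict_iff' hSmeas.compl] at h0'
    filter_upwards [h0'] with x hx hxS
    have := ENNReal.ofReal_eq_zero.mp (hx hxS)
    nlinarith [sq_nonneg (u x)]
  -- The Gagliardo kernel
  set K : Euc n × Euc n → ℝ := fun q => (u q.1 - u q.2) ^ 2 / ‖q.1 - q.2‖ ^ r with hKdef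
  have hKnn : ∀ q, 0 ≤ K q := fun q =>
    div_nonneg (sq_nonneg _) (Real.rpow_nonneg (norm_nonneg _) _)
  have hGag : (∫⁻ q : Euc n × Euc n, ENNReal.ofReal (K q)) = ENNReal.ofReal (gagSq n s u) :=
    (ofReal_integral_eq_lintegral_ofReal huI (ae_of_all _ hKnn)).symm
  have hKmeas : AEMeasurable (fun q => ENNReal.ofReal (K q))
      ((volume : Measure (Euc n)).prod (volume : Measure (Euc n))) := by
    have := huI.aestronglyMeasurable.aemeasurable.ennreal_ofReal
    rwa [Measure.volume_eq_prod] at this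
  set c : ENNReal := ENNReal.ofReal ((4 * M) ^ r) with hc
  have hcne : c ≠ ⊤ := ENNReal.ofReal_ne_top
  -- Step 2 : main estimate
  have key : d * ∫⁻ x in S, ENNReal.ofReal (u x ^ 2) ≤ c * ENNReal.ofReal (gagSq n s u) := by
    calc d * ∫⁻ x in S, ENNReal.ofReal (u x ^ 2)
        = ∫⁻ x in S, ∫⁻ z in D, ENNReal.ofReal (u x ^ 2) := by
          simp_rw [setLIntegral_const]
          rw [lintegral_mul_const' d _ hdfin.ne, mul_comm]
      _ ≤ ∫⁻ x in S, ∫⁻ z in D, c * ENNReal.ofReal (K (x, x + z)) := by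
          refine lintegral_mono_ae ?_
          filter_upwards [ae_restrict_mem hSmeas] with x hxS
          have hz0 : ∀ᵐ z : Euc n, x + z ∉ S → u (x + z) = 0 :=
            ((measurePreserving_add_left volume x).quasiMeasurePreserving.ae hnull)
          refine lintegral_mono_ae ?_
          filter_upwards [ae_restrict_mem hDmeas, ae_restrict_of_ae hz0] with z hzD hz0'
          have hxz : x + z ∉ S := hadd x hxS z hzD
          have hu0 : u (x + z) = 0 := hz0' hxz
          obtain ⟨hzpos, hzle⟩ := hznorm z hzD
          have hKval : K (x, x + z) = u x ^ 2 / ‖z‖ ^ r := by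
            simp only [hKdef, hu0, sub_zero]
            congr 2
            rw [show x - (x + z) = -z by abel, norm_neg]
          have hineq : u x ^ 2 ≤ (4 * M) ^ r * K (x, x + z) := by
            rw [hKval]
            have hbr : ‖z‖ ^ r ≤ (4 * M) ^ r :=
              Real.rpow_le_rpow (norm_nonneg _) hzle hrpos.le
            have hbpos : 0 < ‖z‖ ^ r := Real.rpow_pos_of_pos hzpos r
            rw [mul_div_assoc', le_div_iff₀ hbpos]
            exact (mul_le_mul_of_nonneg_left hbr (sq_nonneg (u x))).trans_eq (mul_comm _ _)
          calc ENNReal.ofReal (u x ^ 2) ≤ ENNReal.ofReal ((4 * M) ^ r * K (x, x + z)) :=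
                ENNReal.ofReal_le_ofReal hineq
            _ = c * ENNReal.ofReal (K (x, x + z)) :=
                ENNReal.ofReal_mul (by positivity)
      _ = c * ∫⁻ x in S, ∫⁻ z in D, ENNReal.ofReal (K (x, x + z)) := by
          simp_rw [lintegral_const_mul' c _ hcne]
      _ ≤ c * ∫⁻ x, ∫⁻ z, ENNReal.ofReal (K (x, x + z)) := by
          refine mul_le_mul_right ?_ c
          refine le_trans (setLIntegral_le_lintegral _ _) (lintegral_mono fun x => ?_)
          exact setLIntegral_le_lintegral _ _
      _ = c * ∫⁻ x, ∫⁻ y, ENNReal.ofReal (K (x, y)) := by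
          congr 1
          refine lintegral_congr fun x => ?_
          exact lintegral_add_left_eq_self (fun y => ENNReal.ofReal (K (x, y))) x
      _ = c * ∫⁻ q : Euc n × Euc n, ENNReal.ofReal (K q) := by
          congr 1
          rw [Measure.volume_eq_prod, MeasureTheory.lintegral_prod _ hKmeas]
      _ = c * ENNReal.ofReal (gagSq n s u) := by rw [hGag]
  -- Step 3 : conclude
  have hl2eq : ENNReal.ofReal (l2Sq u) = ∫⁻ x in S, ENNReal.ofReal (u x ^ 2) := by
    have h1 : ENNReal.ofReal (l2Sq u) = ∫⁻ x, ENNReal.ofReal (u x ^ 2) :=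
      ofReal_integral_eq_lintegral_ofReal hu2.integrable_sq (ae_of_all _ fun x => sq_nonneg _)
    rw [h1, ← lintegral_add_compl (fun x => ENNReal.ofReal (u x ^ 2)) hSmeas, hA, add_zero]
  have key2 : d * ENNReal.ofReal (l2Sq u) ≤ c * ENNReal.ofReal (gagSq n s u) := by
    rw [hl2eq]; exact key
  have hRfin : c * ENNReal.ofReal (gagSq n s u) ≠ ⊤ :=
    ENNReal.mul_ne_top hcne ENNReal.ofReal_ne_top
  have hreal : d.toReal * l2Sq u ≤ (4 * M) ^ r * gagSq n s u := by
    have := ENNReal.toReal_mono hRfin key2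
    rwa [ENNReal.toReal_mul, ENNReal.toReal_mul, ENNReal.toReal_ofReal (hl2nn u),
      ENNReal.toReal_ofReal (hgagnn u), hc, ENNReal.toReal_ofReal (by positivity)] at this
  rw [div_mul_eq_mul_div, le_div_iff₀ hdt, mul_comm (l2Sq u) d.toReal]
  exact hreal
end
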